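/- If v ≡ 1 or 3 mod 6 and v > 3, and a Steiner triple system of order v has 3-rank at most v − 2, then v ≡ 0 mod 3; and if it has 2-rank at most v − 1, then it contains a proper Steiner subsystem of order (v−1)/2, so (v−1)/2 ≡ 1 or 3 mod 6. -/

import Mathlib

/-!
Fix a point `u` of a Steiner triple system. Sending `w` to the third point of the block through
`u` and `w` is a fixed-point-free involution of the remaining points. If `x` is a GF(p)-vector
orthogonal to every block, this involution carries the level set `x = c` (minus `u`) onto the level
set `x = -x u - c`.

Over GF(3), rank–nullity gives such an `x` outside the constants when the 3-rank is at most
`v - 2`; the involutions at two points with different values show that the three level sets have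
equal size, so `3 ∣ v`. Over GF(2), a nonzero `x` exists when the 2-rank is at most `v - 1`; at a
point with `x u = 1` the involution matches the zero set `S` with the rest of the support, so
`v = 2|S| + 1`. A block meeting `S` twice lies in `S`, so the involution at a point of `S` pairs off
the other points of `S`; hence `|S|` is odd, which together with `v ≡ 1, 3 (mod 6)` pins down
`|S| mod 6`.
-/

/-- A Steiner triple system. -/
def IsSTS {V : Type*} [DecidableEq V] (B : Finset (Finset V)) : Prop :=
  (∀ b ∈ B, b.card = 3) ∧
  ∀ p : Finset V, p.card = 2 → ∃! b, b ∈ B ∧ p ⊆ b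

/-- The characteristic vector of a block, over GF(p). -/
def charVec (p v : ℕ) (b : Finset (Fin v)) : Fin v → ZMod p :=
  fun j => if j ∈ b then 1 else 0

open Finset Module

namespace IsSTS

variable {V : Type*} [DecidableEq V] {B : Finset (Finset V)}

theorem exists_third (hB : IsSTS B) {u w : V} (h : u ≠ w) :
    ∃ t, t ≠ u ∧ t ≠ w ∧ {u, w, t} ∈ B ∧
      ∀ b ∈ B, u ∈ b → w ∈ b → b = {u, w, t} := by
  obtain ⟨b, ⟨hbB, hsub⟩, huniq⟩ := hB.2 {u, w} (card_pair h)
  obtain ⟨t, ht⟩ : ∃ t, b \ {u, w} = {t} :=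
    card_eq_one.mp (by rw [card_sdiff_of_subset hsub, hB.1 b hbB, card_pair h])
  have htb : t ∈ b \ {u, w} := ht ▸ mem_singleton_self t
  have hb : b = {u, w, t} := by
    rw [← union_sdiff_of_subset hsub, ht]
    ext; simp
  simp only [mem_sdiff, mem_insert, mem_singleton, not_or] at htb
  refine ⟨t, htb.2.1, htb.2.2, hb ▸ hbB, fun b' hb' hu hw => ?_⟩
  rw [← hb]
  exact huniq b' ⟨hb', insert_subset hu (singleton_subset_iff.mpr hw)⟩

/-- The third point of the block through `u` and `w` (junk value `u` when `u = w`). -/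
noncomputable def third (hB : IsSTS B) (u w : V) : V :=
  if h : u = w then u else (hB.exists_third h).choose

theorem third_spec (hB : IsSTS B) {u w : V} (h : u ≠ w) :
    hB.third u w ≠ u ∧ hB.third u w ≠ w ∧ {u, w, hB.third u w} ∈ B ∧
      ∀ b ∈ B, u ∈ b → w ∈ b → b = {u, w, hB.third u w} := by
  rw [third, dif_neg h]
  exact (hB.exists_third h).choose_spec

theorem third_third (hB : IsSTS B) {u w : V} (h : u ≠ w) :
    hB.third u (hB.third u w) = w := by
  obtain ⟨htu, htw, hblock, -⟩ := hB.third_spec h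
  obtain ⟨-, -, -, huniq⟩ := hB.third_spec htu.symm
  have hw : w ∈ ({u, hB.third u w, hB.third u (hB.third u w)} : Finset V) := by
    rw [← huniq _ hblock (by simp) (by simp)]; simp
  simp only [mem_insert, mem_singleton] at hw
  rcases hw with hw | hw | hw
  · exact absurd hw.symm h
  · exact absurd hw.symm htw
  · exact hw.symm

theorem odd_card_of_closed (hB : IsSTS B) {S : Finset V}
    (hS : ∀ b ∈ B, 2 ≤ #(b ∩ S) → b ⊆ S) (hne : S.Nonempty) : Odd #S := by
  obtain ⟨u, hu⟩ := hne
  have heven : ((#(S.erase u) : ℕ) : ZMod 2) = 0 := by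
    rw [card_eq_sum_ones, Nat.cast_sum, Nat.cast_one]
    refine sum_involution (fun w _ => hB.third u w) (fun _ _ => rfl)
      (fun w hw _ => (hB.third_spec (ne_of_mem_erase hw).symm).2.1) (fun w hw => ?_)
      (fun w hw => hB.third_third (ne_of_mem_erase hw).symm)
    have huw := (ne_of_mem_erase hw).symm
    obtain ⟨htu, -, hblock, -⟩ := hB.third_spec huw
    refine mem_erase.mpr ⟨htu, hS _ hblock ?_ (by simp)⟩
    exact one_lt_card.mpr ⟨u, by simp [hu], w, by simp [mem_of_mem_erase hw], huw⟩
  rw [← card_erase_add_one hu]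
  exact (ZMod.natCast_eq_zero_iff_even.mp heven).add_one

section BlockNull

variable {M : Type*} [AddCancelCommMonoid M] {x : V → M} (hx : ∀ b ∈ B, ∑ i ∈ b, x i = 0)
include hx

theorem add_add_third_eq_zero (hB : IsSTS B) {u w : V} (h : u ≠ w) :
    x u + x w + x (hB.third u w) = 0 := by
  obtain ⟨htu, htw, hblock, -⟩ := hB.third_spec h
  have hs := hx _ hblock
  rwa [sum_insert (by simp [h, htu.symm]), sum_insert (by simp [htw.symm]), sum_singleton,
    ← add_assoc] at hs

theorem subset_zeroSet_of_two_le_card_inter [Fintype V] [DecidableEq M] (hB : IsSTS B)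
    {b : Finset V} (hb : b ∈ B) (h2 : 2 ≤ #(b ∩ ({w | x w = 0} : Finset V))) :
    b ⊆ ({w | x w = 0} : Finset V) := by
  obtain ⟨p, hp, q, hq, hpq⟩ := one_lt_card.mp h2
  simp only [mem_inter, mem_filter, mem_univ, true_and] at hp hq
  have hxt := hB.add_add_third_eq_zero hx hpq
  rw [hp.2, hq.2, zero_add, zero_add] at hxt
  rw [(hB.third_spec hpq).2.2.2 b hb hp.1 hq.1]
  simp [insert_subset_iff, hp.2, hq.2, hxt]

theorem card_erase_fiber_eq [Fintype V] [DecidableEq M] (hB : IsSTS B) (u : V) {c d : M}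
    (hcd : x u + c + d = 0) :
    #(({w | x w = c} : Finset V).erase u) = #(({w | x w = d} : Finset V).erase u) := by
  have maps : ∀ {c d : M}, x u + c + d = 0 →
      Set.MapsTo (hB.third u) (({w | x w = c} : Finset V).erase u)
        (({w | x w = d} : Finset V).erase u) := by
    intro c d hcd w hw
    simp only [mem_coe, mem_erase, mem_filter, mem_univ, true_and] at hw ⊢
    have hsum := hB.add_add_third_eq_zero hx (Ne.symm hw.1)
    rw [hw.2] at hsum
    exact ⟨(hB.third_spec (Ne.symm hw.1)).1, add_left_cancel (hsum.trans hcd.symm)⟩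
  have inv : ∀ s : Finset V, Set.LeftInvOn (hB.third u) (hB.third u) (s.erase u) :=
    fun s w hw => hB.third_third (Ne.symm (ne_of_mem_erase hw))
  exact card_nbij' _ _ (maps hcd) (maps (by rwa [add_right_comm])) (inv _) (inv _)

end BlockNull

theorem three_dvd_card [Fintype V] (hB : IsSTS B) {x : V → ZMod 3}
    (hx : ∀ b ∈ B, ∑ i ∈ b, x i = 0) {u u' : V} (hne : x u ≠ x u') :
    3 ∣ Fintype.card V := by
  set n : ZMod 3 → ℕ := fun c => #({w | x w = c} : Finset V)
  have fiber_eq : ∀ u c d, x u + c + d = 0 → c ≠ x u → d ≠ x u → n c = n d := by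
    intro u c d hcd hc hd
    simpa [n, erase_eq_of_notMem, hc.symm, hd.symm] using hB.card_erase_fiber_eq hx u hcd
  have values : ∀ a b : ZMod 3, a ≠ b →
      -a - b ≠ a ∧ -a - b ≠ b ∧ ∀ c, c = a ∨ c = b ∨ c = -a - b := by decide
  obtain ⟨hne₁, hne₂, hcases⟩ := values _ _ hne
  have h₁ : n (x u') = n (-x u - x u') := fiber_eq u _ _ (by ring) hne.symm hne₁
  have h₂ : n (x u) = n (-x u - x u') := fiber_eq u' _ _ (by ring) hne hne₂
  have hall : ∀ c, n c = n (-x u - x u') := by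
    intro c
    rcases hcases c with rfl | rfl | rfl
    exacts [h₂, h₁, rfl]
  have hsum : Fintype.card V = ∑ c, n c :=
    card_eq_sum_card_fiberwise fun w _ => mem_univ (x w)
  rw [hsum, Fintype.sum_congr _ _ hall, sum_const, card_univ, ZMod.card, smul_eq_mul]
  exact dvd_mul_right _ _

theorem card_eq_two_mul_card_zeroSet_add_one [Fintype V] (hB : IsSTS B) {x : V → ZMod 2}
    (hx : ∀ b ∈ B, ∑ i ∈ b, x i = 0) {u : V} (hu : x u ≠ 0) :
    Fintype.card V = 2 * #({w | x w = 0} : Finset V) + 1 := by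
  have hu1 : x u = 1 := (by decide : ∀ c : ZMod 2, c ≠ 0 → c = 1) _ hu
  have h := hB.card_erase_fiber_eq hx u (c := 0) (d := 1) (by rw [hu1]; rfl)
  rw [erase_eq_of_notMem (by simp [hu]), card_erase_of_mem (by simp [hu1])] at h
  have hpos : 0 < #({w | x w = 1} : Finset V) := card_pos.mpr ⟨u, by simp [hu1]⟩
  have hsum : Fintype.card V = #({w | x w = 0} : Finset V) + #({w | x w = 1} : Finset V) :=
    (card_eq_sum_card_fiberwise fun w _ => mem_univ (x w)).trans (Fin.sum_univ_two _)
  omega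

end IsSTS

theorem exists_notMem_forall_dotProduct_eq_zero {m n K : Type*} [Finite m] [Fintype n] [Field K]
    (r : m → n → K) (U : Submodule K (n → K))
    (h : finrank K (Submodule.span K (Set.range r)) + finrank K U < Fintype.card n) :
    ∃ x ∉ U, ∀ i, r i ⬝ᵥ x = 0 := by
  set A := Matrix.of r
  have hrank : finrank K (LinearMap.range A.mulVecLin) =
      finrank K (Submodule.span K (Set.range r)) := A.rank_eq_finrank_span_row
  have hker := LinearMap.finrank_range_add_finrank_ker A.mulVecLin
  rw [Module.finrank_fintype_fun_eq_card] at hker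
  have hnle : ¬ LinearMap.ker A.mulVecLin ≤ U := fun hle =>
    (Submodule.finrank_mono hle).not_gt (by omega)
  obtain ⟨x, hxker, hxU⟩ := SetLike.not_le_iff_exists.mp hnle
  exact ⟨x, hxU, fun i => congrFun (LinearMap.mem_ker.mp hxker) i⟩

theorem exists_apply_ne_of_notMem_span_const {ι K : Type*} [Semiring K] {x : ι → K}
    (hx : x ∉ Submodule.span K {fun _ => 1}) : ∃ u u', x u ≠ x u' := by
  by_contra! hconst
  apply hx
  rcases isEmpty_or_nonempty ι with _ | ⟨⟨i⟩⟩
  · rw [Subsingleton.elim x 0]; exact zero_mem _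
  · exact Submodule.mem_span_singleton.mpr ⟨x i, funext fun j => by simp [hconst j i]⟩

theorem charVec_dotProduct (p v : ℕ) (b : Finset (Fin v)) (x : Fin v → ZMod p) :
    charVec p v b ⬝ᵥ x = ∑ i ∈ b, x i := by
  simp [charVec, dotProduct, ite_mul, sum_ite_mem]

theorem exists_notMem_forall_sum_eq_zero (p v : ℕ) [Fact p.Prime] (B : Finset (Finset (Fin v)))
    (U : Submodule (ZMod p) (Fin v → ZMod p))
    (h : finrank (ZMod p) (Submodule.span (ZMod p) (charVec p v '' ↑B)) +
      finrank (ZMod p) U < v) :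
    ∃ x ∉ U, ∀ b ∈ B, ∑ i ∈ b, x i = 0 := by
  rw [Set.image_eq_range] at h
  obtain ⟨x, hxU, hx⟩ := exists_notMem_forall_dotProduct_eq_zero _ U (by simpa using h)
  exact ⟨x, hxU, fun b hb => (charVec_dotProduct p v b x).symm.trans (hx ⟨b, hb⟩)⟩

/-- Let `v ≡ 1, 3 (mod 6)`, `v > 3`, and let `B` be an STS(v). If its 3-rank is
at most `v − 2` then `3 ∣ v`; and if its 2-rank is at most `v − 1` then it
contains a proper subsystem on `(v−1)/2` points, so `(v−1)/2 ≡ 1` or `3 (mod 6)`. -/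
theorem nonfull_rank_consequences (v : ℕ) (hv : 3 < v)
    (hmod : v % 6 = 1 ∨ v % 6 = 3)
    (B : Finset (Finset (Fin v))) (hB : IsSTS B) :
    (Module.finrank (ZMod 3) (Submodule.span (ZMod 3) (charVec 3 v '' ↑B)) ≤ v - 2 →
      3 ∣ v) ∧
    (Module.finrank (ZMod 2) (Submodule.span (ZMod 2) (charVec 2 v '' ↑B)) ≤ v - 1 →
      (∃ S' : Finset (Fin v), S'.card = (v - 1) / 2 ∧ S' ≠ Finset.univ ∧
        ∀ b ∈ B, 2 ≤ (b ∩ S').card → b ⊆ S') ∧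
      ((v - 1) / 2 % 6 = 1 ∨ (v - 1) / 2 % 6 = 3)) := by
  constructor
  · intro hrk
    set U := Submodule.span (ZMod 3) {fun _ : Fin v => (1 : ZMod 3)}
    have hU : finrank (ZMod 3) U ≤ 1 := (finrank_span_le_card _).trans (by simp)
    obtain ⟨x, hxconst, hx⟩ := exists_notMem_forall_sum_eq_zero 3 v B U (by omega)
    obtain ⟨u, u', hne⟩ := exists_apply_ne_of_notMem_span_const hxconst
    simpa using hB.three_dvd_card hx hne
  · intro hrk
    obtain ⟨x, hx0, hx⟩ := exists_notMem_forall_sum_eq_zero 2 v B ⊥ (by rw [finrank_bot]; omega)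
    obtain ⟨u, hu⟩ := Function.ne_iff.mp (by simpa using hx0)
    have hcard := hB.card_eq_two_mul_card_zeroSet_add_one hx hu
    rw [Fintype.card_fin] at hcard
    have hclosed := fun b hb => hB.subset_zeroSet_of_two_le_card_inter hx (b := b) hb
    obtain ⟨k, hk⟩ := hB.odd_card_of_closed hclosed (card_pos.mp (by omega))
    have hproper : ({w | x w = 0} : Finset (Fin v)) ≠ univ :=
      (ne_of_mem_of_not_mem' (mem_univ u) (by simpa using hu)).symm
    exact ⟨⟨_, by omega, hproper, hclosed⟩, by omega⟩
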